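/- Let K be a field of characteristic not 2, V a K-vector space of dimension 3, and Q a quadratic form on V. Then for every element x of the Clifford algebra of Q, the nested product x * involute (x * reverse (x * involute x)) is a scalar, i.e. it lies in the range of algebraMap K (CliffordAlgebra Q). (This is the paper's second nested three-dimensional determinant formula Det(A) = A⟦A⟦A⟦A⟧₁₃⟧₂⟧₁₃.) -/

import Mathlib

/-!
Write `star` for Clifford conjugation `reverse ∘ involute` and put `N = x * star x`; the nested
product is `x * involute N * star x`. Take an orthogonal basis `e₀, e₁, e₂` and the pseudoscalar
`I = e₀ e₁ e₂`. Since `I` commutes with every `eᵢ`, the span of `1` and `I` is central, and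
checking the eight blades `eᵢ₁ ⋯ eᵢₖ`, which span the algebra, shows that it contains
`w + star w` for every `w`. As `N` is `star`-fixed and `2` is invertible, `N = a + c I`, so the
nested product is `involute N * N = a² - c² I²`, a scalar because `I²` is.
-/

open CliffordAlgebra Submodule

namespace Submodule

variable {R A : Type*} [CommRing R] [Ring A] [Algebra R A]

theorem span_singleton_mul_span_one_le {w : A} (hw : w * w ∈ Set.range (algebraMap R A)) :
    (R ∙ w) * span R {1, w} ≤ span R {1, w} := by
  obtain ⟨r, hr⟩ := hw
  rw [span_mul_span, Set.singleton_mul, Set.image_pair, mul_one, ← hr,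
    Algebra.algebraMap_eq_smul_one, span_le, Set.pair_subset_iff]
  exact ⟨subset_span (by simp), smul_mem _ r (subset_span (by simp))⟩

theorem span_singleton_mul_span_one_le_of_anticomm {u w : A} (h : u * w = -(w * u)) :
    (R ∙ u) * span R {1, w} ≤ span R {1, w} * (R ∙ u) := by
  rw [span_mul_span, span_mul_span, Set.singleton_mul, Set.image_pair, mul_one, h, span_le,
    Set.pair_subset_iff, Set.mul_singleton, Set.image_pair, one_mul]
  exact ⟨subset_span (by simp), neg_mem (subset_span (by simp))⟩

end Submodule

namespace CliffordAlgebra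

variable {R M : Type*} [CommRing R] [AddCommGroup M] [Module R M] {Q : QuadraticForm R M}

theorem mul_involute_mul_reverse_mul_involute (x : CliffordAlgebra Q) :
    x * involute (x * reverse (x * involute x)) = x * involute (x * star x) * star x := by
  simp only [star_def, map_mul, reverse.map_mul, reverse_involute, involute_involute, mul_assoc]

theorem ι_mul_ι_mul_self (m : M) (x : CliffordAlgebra Q) : ι Q m * (ι Q m * x) = Q m • x := by
  rw [← mul_assoc, ι_sq_scalar, Algebra.smul_def]

theorem range_ι_le_iSup_span_basis {κ : Type*} (b : Module.Basis κ R M) :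
    LinearMap.range (ι Q) ≤ ⨆ i, R ∙ ι Q (b i) := by
  rw [LinearMap.range_eq_map, ← b.span_eq, map_span, ← Set.range_comp, ← span_range_eq_iSup]
  rfl

theorem eq_top_of_one_mem_of_range_ι_mul_le {P : Submodule R (CliffordAlgebra Q)}
    (h1 : (1 : CliffordAlgebra Q) ∈ P) (hι : LinearMap.range (ι Q) * P ≤ P) : P = ⊤ := by
  refine eq_top_iff'.2 fun x => ?_
  suffices ∀ p ∈ P, x * p ∈ P by simpa using this 1 h1
  induction x using CliffordAlgebra.induction with
  | algebraMap r =>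
    exact fun p hp => by simpa [Algebra.algebraMap_eq_smul_one] using smul_mem P r hp
  | ι v => exact fun p hp => hι (mul_mem_mul (LinearMap.mem_range_self _ v) hp)
  | mul a c ha hc => exact fun p hp => by simpa [mul_assoc] using ha _ (hc p hp)
  | add a c ha hc => exact fun p hp => by simpa [add_mul] using add_mem (ha p hp) (hc p hp)

variable {b : Module.Basis (Fin 3) R M}

theorem span_one_ι_mul_span_one_ι_mul_span_one_ι_eq_top
    (hb : Pairwise fun i j => Q.IsOrtho (b i) (b j)) :
    span R {1, ι Q (b 0)} * span R {1, ι Q (b 1)} * span R {1, ι Q (b 2)} = ⊤ := by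
  set A : Fin 3 → Submodule R (CliffordAlgebra Q) := fun i => span R {1, ι Q (b i)}
  have h1 (i) : (1 : CliffordAlgebra Q) ∈ A i := subset_span (Set.mem_insert _ _)
  have hsq i B : (R ∙ ι Q (b i)) * (A i * B) ≤ A i * B := by
    rw [← mul_assoc]
    exact mul_le_mul_left (span_singleton_mul_span_one_le ⟨_, (ι_sq_scalar Q (b i)).symm⟩) B
  have hanti i j (hij : i ≠ j) B :
      (R ∙ ι Q (b i)) * (A j * B) ≤ A j * ((R ∙ ι Q (b i)) * B) := by
    rw [← mul_assoc, ← mul_assoc]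
    exact mul_le_mul_left
      (span_singleton_mul_span_one_le_of_anticomm (ι_mul_ι_comm_of_isOrtho (hb hij))) B
  refine eq_top_of_one_mem_of_range_ι_mul_le
    (by simpa using mul_mem_mul (mul_mem_mul (h1 0) (h1 1)) (h1 2)) ?_
  refine (mul_le_mul_left (range_ι_le_iSup_span_basis b) _).trans ?_
  rw [iSup_mul, iSup_le_iff]
  intro i
  simp only [mul_assoc]
  fin_cases i
  · exact hsq 0 _
  · exact (hanti 1 0 (by decide) _).trans (mul_le_mul_right (hsq 1 _) _)
  · refine (hanti 2 0 (by decide) _).trans (mul_le_mul_right ?_ _)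
    exact (hanti 2 1 (by decide) _).trans (mul_le_mul_right (by simpa using hsq 2 1) _)

theorem ι_basis_mul_ι_basis_of_lt (hb : Pairwise fun i j => Q.IsOrtho (b i) (b j))
    {i j : Fin 3} (h : j < i) : ι Q (b i) * ι Q (b j) = -(ι Q (b j) * ι Q (b i)) :=
  ι_mul_ι_comm_of_isOrtho (hb h.ne')

theorem ι_basis_mul_ι_basis_mul_of_lt (hb : Pairwise fun i j => Q.IsOrtho (b i) (b j))
    {i j : Fin 3} (h : j < i) (x : CliffordAlgebra Q) :
    ι Q (b i) * (ι Q (b j) * x) = -(ι Q (b j) * (ι Q (b i) * x)) :=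
  ι_mul_ι_mul_of_isOrtho x (hb h.ne')

variable (Q) in
noncomputable def pseudoscalar (b : Module.Basis (Fin 3) R M) : CliffordAlgebra Q :=
  ι Q (b 0) * ι Q (b 1) * ι Q (b 2)

theorem involute_pseudoscalar : involute (pseudoscalar Q b) = -pseudoscalar Q b := by
  simp [pseudoscalar]

theorem pseudoscalar_mul_self (hb : Pairwise fun i j => Q.IsOrtho (b i) (b j)) :
    pseudoscalar Q b * pseudoscalar Q b = algebraMap R _ (-(Q (b 0) * Q (b 1) * Q (b 2))) := by
  simp [pseudoscalar, mul_assoc, ι_sq_scalar, ι_basis_mul_ι_basis_mul_of_lt hb,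
    Algebra.algebraMap_eq_smul_one, smul_smul, mul_comm, mul_left_comm]

theorem commute_ι_pseudoscalar (hb : Pairwise fun i j => Q.IsOrtho (b i) (b j)) (i : Fin 3) :
    Commute (ι Q (b i)) (pseudoscalar Q b) := by
  unfold Commute SemiconjBy pseudoscalar
  fin_cases i <;> simp [mul_assoc, ι_mul_ι_mul_self, ι_basis_mul_ι_basis_mul_of_lt hb,
    ι_basis_mul_ι_basis_of_lt hb]

theorem commute_pseudoscalar (hb : Pairwise fun i j => Q.IsOrtho (b i) (b j))
    (y : CliffordAlgebra Q) : Commute (pseudoscalar Q b) y := by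
  have hι (v : M) : Commute (pseudoscalar Q b) (ι Q v) := by
    have : LinearMap.mulLeft R (pseudoscalar Q b) ∘ₗ ι Q =
        LinearMap.mulRight R (pseudoscalar Q b) ∘ₗ ι Q :=
      b.ext fun i => (commute_ι_pseudoscalar hb i).symm.eq
    exact LinearMap.congr_fun this v
  induction y using CliffordAlgebra.induction with
  | algebraMap r => exact (Algebra.commutes' r _).symm
  | ι v => exact hι v
  | mul a c ha hc => exact ha.mul_right hc
  | add a c ha hc => exact ha.add_right hc

theorem span_one_pseudoscalar_le_center (hb : Pairwise fun i j => Q.IsOrtho (b i) (b j)) :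
    span R {1, pseudoscalar Q b} ≤ Subalgebra.toSubmodule (Subalgebra.center R _) := by
  rw [span_le, Set.pair_subset_iff]
  exact ⟨(Subalgebra.center R _).one_mem,
    (Subalgebra.mem_center_iff (R := R)).2 fun y => (commute_pseudoscalar hb y).eq.symm⟩

theorem involute_mem_span_one_pseudoscalar {z : CliffordAlgebra Q}
    (hz : z ∈ span R {1, pseudoscalar Q b}) : involute z ∈ span R {1, pseudoscalar Q b} := by
  obtain ⟨s, t, rfl⟩ := mem_span_pair.1 hz
  exact mem_span_pair.2 ⟨s, -t, by simp [involute_pseudoscalar]⟩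

theorem add_star_mem_span_one_pseudoscalar (hb : Pairwise fun i j => Q.IsOrtho (b i) (b j))
    (w : CliffordAlgebra Q) : w + star w ∈ span R {1, pseudoscalar Q b} := by
  let f : CliffordAlgebra Q →ₗ[R] CliffordAlgebra Q :=
    LinearMap.id + reverse ∘ₗ involute.toLinearMap
  suffices ⊤ ≤ (span R {1, pseudoscalar Q b}).comap f from this (mem_top (x := w))
  rw [← span_one_ι_mul_span_one_ι_mul_span_one_ι_eq_top hb, span_mul_span, span_mul_span,
    span_le]
  rintro _ ⟨_, ⟨a, ha, c, hc, rfl⟩, d, hd, rfl⟩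
  simp only [Set.mem_insert_iff, Set.mem_singleton_iff] at ha hc hd
  rcases ha with rfl | rfl <;> rcases hc with rfl | rfl <;> rcases hd with rfl | rfl <;>
    simp [f, pseudoscalar, mul_assoc, ι_basis_mul_ι_basis_mul_of_lt hb,
      ι_basis_mul_ι_basis_of_lt hb, add_mem, mem_span_of_mem]

theorem mul_star_mem_span_one_pseudoscalar [Invertible (2 : R)]
    (hb : Pairwise fun i j => Q.IsOrtho (b i) (b j)) (x : CliffordAlgebra Q) :
    x * star x ∈ span R {1, pseudoscalar Q b} := by
  have h := add_star_mem_span_one_pseudoscalar hb (x * star x)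
  rw [star_mul, star_star, ← two_smul R] at h
  simpa using smul_mem _ (⅟2 : R) h

theorem involute_mul_self_mem_range_of_mem_span_one_pseudoscalar
    (hb : Pairwise fun i j => Q.IsOrtho (b i) (b j)) {z : CliffordAlgebra Q}
    (hz : z ∈ span R {1, pseudoscalar Q b}) :
    involute z * z ∈ Set.range (algebraMap R (CliffordAlgebra Q)) := by
  obtain ⟨s, t, rfl⟩ := mem_span_pair.1 hz
  refine ⟨s ^ 2 + t ^ 2 * (Q (b 0) * Q (b 1) * Q (b 2)), ?_⟩
  simp only [map_add, map_smul, map_one, involute_pseudoscalar, Algebra.algebraMap_eq_smul_one,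
    add_mul, mul_add, neg_mul, smul_neg, Algebra.smul_mul_assoc, Algebra.mul_smul_comm, one_mul,
    mul_one, pseudoscalar_mul_self hb]
  module

end CliffordAlgebra

/-- In dimension 3 (char K ≠ 2), the nested product
`x * involute (x * reverse (x * involute x))` is a scalar: the paper's second
nested three-dimensional determinant formula
`Det(A) = A ⟦A ⟦A ⟦A⟧₁₃⟧₂⟧₁₃`. -/
theorem det_dim_three_nested_second (K V : Type*) [Field K] [AddCommGroup V]
    [Module K V] [FiniteDimensional K V] (h2 : (2 : K) ≠ 0)
    (hdim : Module.finrank K V = 3)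
    (Q : QuadraticForm K V) (x : CliffordAlgebra Q) :
    x * involute (x * reverse (x * involute x)) ∈
      Set.range (algebraMap K (CliffordAlgebra Q)) := by
  have : Invertible (2 : K) := invertibleOfNonzero h2
  obtain ⟨v, hv⟩ :=
    LinearMap.BilinForm.exists_orthogonal_basis (QuadraticForm.associated_isSymm K Q)
  let b := v.reindex (finCongr hdim)
  have hb : Pairwise fun i j => Q.IsOrtho (b i) (b j) := fun i j hij =>
    QuadraticMap.associated_isOrtho.1 <| by
      simpa [b] using hv ((finCongr hdim).symm.injective.ne hij)
  have hN := mul_star_mem_span_one_pseudoscalar hb x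
  have hcomm : x * involute (x * star x) = involute (x * star x) * x :=
    (Subalgebra.mem_center_iff (R := K)).1
      (span_one_pseudoscalar_le_center hb (involute_mem_span_one_pseudoscalar hN)) x
  rw [mul_involute_mul_reverse_mul_involute, hcomm, mul_assoc]
  exact involute_mul_self_mem_range_of_mem_span_one_pseudoscalar hb hN
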